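/- Let ω, J : ℝ → ℝ be smooth and let U ⊆ {(α,β) ∈ ℝ² : α > 0} be an open set on which D(α,β) = 2 J(β/α) + α² ω(α²+β²) ≠ 0. Define on U (with w = β/α, u = α²+β²) the symmetric 2-tensors S₁ with components (S₁)_{αα} = (2α² J(w) − α²β² ω(u))/D, (S₁)_{αβ} = (S₁)_{βα} = αβ, (S₁)_{ββ} = (2β² J(w) − α⁴ ω(u))/D, and S₂ = (α²/D)·Id₂. Then, with respect to the flat metric δ (so covariant derivatives are partial derivatives) and the potential V = (1/2) ω(u) + α^{−2} J(w), each of S₁ and S₂ admits a smooth covector field ψ on U such that ∂_{(μ} S_{αβ)} = ψ_{(μ} δ_{αβ)} and S_{σμ} ∂_σ V + ψ_μ V = 0; i.e. S₁ and S₂ are conformal Killing tensors of the flat 2-dimensional metric satisfying the contact Noether symmetry condition for every choice of ω and J. -/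

import Mathlib

open scoped BigOperators

noncomputable section

namespace ErmakovCKT

/-- Partial derivative `∂_σ f` at `x ∈ ℝ²`. -/
def pderiv' (f : (Fin 2 → ℝ) → ℝ) (σ : Fin 2) (x : Fin 2 → ℝ) : ℝ :=
  fderiv ℝ f x (Pi.single σ 1)

/-- The Ermakov–Ray–Reid potential `V = (1/2) ω(α²+β²) + α⁻² J(β/α)`,
with coordinates `α = x 0`, `β = x 1`. -/
def pot (ω J : ℝ → ℝ) (x : Fin 2 → ℝ) : ℝ :=
  (1/2) * ω ((x 0)^2 + (x 1)^2) + ((x 0)^2)⁻¹ * J (x 1 / x 0)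

/-- `D = 2 J(β/α) + α² ω(α²+β²)`. -/
def Dfun (ω J : ℝ → ℝ) (x : Fin 2 → ℝ) : ℝ :=
  2 * J (x 1 / x 0) + (x 0)^2 * ω ((x 0)^2 + (x 1)^2)

/-- The tensor `S₁`. -/
def S₁ (ω J : ℝ → ℝ) (x : Fin 2 → ℝ) : Fin 2 → Fin 2 → ℝ :=
  ![![(2 * (x 0)^2 * J (x 1 / x 0) - (x 0)^2 * (x 1)^2 * ω ((x 0)^2 + (x 1)^2)) / Dfun ω J x,
      x 0 * x 1],
    ![x 0 * x 1,
      (2 * (x 1)^2 * J (x 1 / x 0) - (x 0)^4 * ω ((x 0)^2 + (x 1)^2)) / Dfun ω J x]]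

/-- The tensor `S₂ = (α²/D)·Id₂`. -/
def S₂ (ω J : ℝ → ℝ) (x : Fin 2 → ℝ) : Fin 2 → Fin 2 → ℝ :=
  ![![(x 0)^2 / Dfun ω J x, 0], ![0, (x 0)^2 / Dfun ω J x]]

/-- `S` is a conformal Killing tensor of the flat 2d metric, with covector `ψ`, satisfying the
contact Noether symmetry condition for the potential `V`:
`∂_{(μ} S_{αβ)} = ψ_{(μ} δ_{αβ)}` and `S_{σμ} ∂_σ V + ψ_μ V = 0`. -/
def IsContactSymmetryTensor (U : Set (Fin 2 → ℝ)) (V : (Fin 2 → ℝ) → ℝ)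
    (S : (Fin 2 → ℝ) → Fin 2 → Fin 2 → ℝ) (ψ : (Fin 2 → ℝ) → Fin 2 → ℝ) : Prop :=
  (∀ x ∈ U, ∀ i j k : Fin 2,
      (pderiv' (fun y => S y i j) k x + pderiv' (fun y => S y j k) i x
        + pderiv' (fun y => S y k i) j x) / 3 =
      (ψ x k * (if i = j then (1:ℝ) else 0) + ψ x i * (if j = k then (1:ℝ) else 0)
        + ψ x j * (if k = i then (1:ℝ) else 0)) / 3)
  ∧ (∀ x ∈ U, ∀ k : Fin 2, (∑ σ, S x σ k * pderiv' V σ x) + ψ x k * V x = 0)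

/-! ### Auxiliary machinery -/

open Filter

def pr (i : Fin 2) : (Fin 2 → ℝ) →L[ℝ] ℝ := ContinuousLinearMap.proj i

lemma hfd_proj (i : Fin 2) (x : Fin 2 → ℝ) :
    HasFDerivAt (fun y : Fin 2 → ℝ => y i) (pr i) x := (pr i).hasFDerivAt

lemma hfd_sq (i : Fin 2) (x : Fin 2 → ℝ) :
    HasFDerivAt (fun y : Fin 2 → ℝ => (y i)^2) ((2 * x i) • pr i) x := by
  have h := (hfd_proj i x).mul (hfd_proj i x)
  have e : (fun y : Fin 2 → ℝ => (y i)^2) = fun y => y i * y i := by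
    funext y; ring
  rw [e, two_mul, add_smul]; exact h

lemma pd {f : (Fin 2 → ℝ) → ℝ} {L : (Fin 2 → ℝ) →L[ℝ] ℝ} {x : Fin 2 → ℝ} {σ : Fin 2}
    (h : HasFDerivAt f L x) : pderiv' f σ x = L (Pi.single σ 1) := by
  rw [pderiv', h.fderiv]

lemma pdcongr {f g : (Fin 2 → ℝ) → ℝ} {σ : Fin 2} {x : Fin 2 → ℝ}
    (h : f =ᶠ[nhds x] g) : pderiv' f σ x = pderiv' g σ x := by
  rw [pderiv', pderiv', h.fderiv_eq]

lemma pderiv'_sub {f g : (Fin 2 → ℝ) → ℝ} {σ : Fin 2} {x : Fin 2 → ℝ}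
    (hf : DifferentiableAt ℝ f x) (hg : DifferentiableAt ℝ g x) :
    pderiv' (fun y => f y - g y) σ x = pderiv' f σ x - pderiv' g σ x := by
  rw [pderiv', pderiv', pderiv', fderiv_fun_sub hf hg]; rfl

lemma pderiv'_const {σ : Fin 2} {x : Fin 2 → ℝ} (c : ℝ) :
    pderiv' (fun _ => c) σ x = 0 := by
  rw [pderiv', fderiv_fun_const]; rfl

lemma pderiv'_mul {f g : (Fin 2 → ℝ) → ℝ} {σ : Fin 2} {x : Fin 2 → ℝ}
    (hf : DifferentiableAt ℝ f x) (hg : DifferentiableAt ℝ g x) :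
    pderiv' (fun y => f y * g y) σ x = f x * pderiv' g σ x + g x * pderiv' f σ x := by
  rw [pderiv', pderiv', pderiv', fderiv_fun_mul hf hg]; rfl

lemma fdiv {c d : (Fin 2 → ℝ) → ℝ} {c' d' : (Fin 2 → ℝ) →L[ℝ] ℝ} {x : Fin 2 → ℝ}
    (hc : HasFDerivAt c c' x) (hd : HasFDerivAt d d' x) (hne : d x ≠ 0) :
    HasFDerivAt (fun y => c y / d y)
      (c x • (-((d x)^2)⁻¹ • d') + (d x)⁻¹ • c') x := by
  have h1 := (hasDerivAt_inv hne).comp_hasFDerivAt x hd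
  have h2 := hc.mul h1
  simpa only [div_eq_mul_inv, Function.comp_def, Pi.mul_def] using h2

lemma psmooth {F : (Fin 2 → ℝ) → ℝ} {U : Set (Fin 2 → ℝ)} (hF : ContDiffOn ℝ (⊤ : ℕ∞) F U)
    (hU : IsOpen U) (k : Fin 2) : ContDiffOn ℝ (⊤ : ℕ∞) (fun x => pderiv' F k x) U := by
  have h1 := hF.fderiv_of_isOpen hU (m := (⊤ : ℕ∞)) (by simp)
  exact h1.clm_apply contDiffOn_const


set_option maxHeartbeats 2000000 in
/-- For every smooth `ω`, `J`, the tensors `S₁` and `S₂` are conformal Killing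
tensors of the flat 2-dimensional metric satisfying the contact Noether symmetry condition
for the Ermakov–Ray–Reid potential. -/
theorem ermakov_conformal_killing_tensors (ω J : ℝ → ℝ)
    (hω : ContDiff ℝ (⊤ : ℕ∞) ω) (hJ : ContDiff ℝ (⊤ : ℕ∞) J)
    (U : Set (Fin 2 → ℝ)) (hU : IsOpen U)
    (hUpos : ∀ x ∈ U, 0 < x 0)
    (hUD : ∀ x ∈ U, Dfun ω J x ≠ 0) :
    (∃ ψ : (Fin 2 → ℝ) → Fin 2 → ℝ, (∀ σ, ContDiffOn ℝ (⊤ : ℕ∞) (fun x => ψ x σ) U) ∧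
      IsContactSymmetryTensor U (pot ω J) (S₁ ω J) ψ)
    ∧ (∃ ψ : (Fin 2 → ℝ) → Fin 2 → ℝ, (∀ σ, ContDiffOn ℝ (⊤ : ℕ∞) (fun x => ψ x σ) U) ∧
      IsContactSymmetryTensor U (pot ω J) (S₂ ω J) ψ) := by
  have hane : ∀ x ∈ U, x 0 ≠ 0 := fun x hx => ne_of_gt (hUpos x hx)
  have hc0 : ContDiff ℝ (⊤ : ℕ∞) (fun y : Fin 2 → ℝ => y 0) := (pr 0).contDiff
  have hc1 : ContDiff ℝ (⊤ : ℕ∞) (fun y : Fin 2 → ℝ => y 1) := (pr 1).contDiff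
  have hcsq0 : ContDiff ℝ (⊤ : ℕ∞) (fun y : Fin 2 → ℝ => (y 0)^2) := hc0.pow 2
  have hcu : ContDiff ℝ (⊤ : ℕ∞) (fun y : Fin 2 → ℝ => (y 0)^2 + (y 1)^2) :=
    (hc0.pow 2).add (hc1.pow 2)
  have hcw : ContDiffOn ℝ (⊤ : ℕ∞) (fun y : Fin 2 → ℝ => y 1 / y 0) U :=
    hc1.contDiffOn.div hc0.contDiffOn hane
  have hcJw : ContDiffOn ℝ (⊤ : ℕ∞) (fun y : Fin 2 → ℝ => J (y 1 / y 0)) U :=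
    hJ.comp_contDiffOn hcw
  have hcωu : ContDiff ℝ (⊤ : ℕ∞) (fun y : Fin 2 → ℝ => ω ((y 0)^2 + (y 1)^2)) := hω.comp hcu
  have hcD : ContDiffOn ℝ (⊤ : ℕ∞) (Dfun ω J) U := by
    have : ContDiffOn ℝ (⊤ : ℕ∞)
        (fun y : Fin 2 → ℝ => 2 * J (y 1 / y 0) + (y 0)^2 * ω ((y 0)^2 + (y 1)^2)) U :=
      (contDiffOn_const.mul hcJw).add (hcsq0.contDiffOn.mul hcωu.contDiffOn)
    exact this
  have hcf2 : ContDiffOn ℝ (⊤ : ℕ∞) (fun y => (y 0)^2 / Dfun ω J y) U :=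
    hcsq0.contDiffOn.div hcD hUD
  have hcpot : ContDiffOn ℝ (⊤ : ℕ∞) (pot ω J) U := by
    have : ContDiffOn ℝ (⊤ : ℕ∞)
        (fun y : Fin 2 → ℝ => (1/2) * ω ((y 0)^2 + (y 1)^2) + ((y 0)^2)⁻¹ * J (y 1 / y 0)) U :=
      (contDiffOn_const.mul hcωu.contDiffOn).add
        ((hcsq0.contDiffOn.inv (fun x hx => pow_ne_zero 2 (hane x hx))).mul hcJw)
    exact this
  have hcG : ContDiffOn ℝ (⊤ : ℕ∞)
      (fun y => (y 0)^2 * ((y 0)^2 + (y 1)^2) * ω ((y 0)^2 + (y 1)^2) / Dfun ω J y) U :=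
    ((hcsq0.contDiffOn.mul hcu.contDiffOn).mul hcωu.contDiffOn).div hcD hUD
  constructor
  · -- S₁
    set G : (Fin 2 → ℝ) → ℝ :=
      fun y => (y 0)^2 * ((y 0)^2 + (y 1)^2) * ω ((y 0)^2 + (y 1)^2) / Dfun ω J y with hGdef
    refine ⟨fun x k => 2 * x k - pderiv' G k x,
      fun σ => (contDiffOn_const.mul ((pr σ).contDiff.contDiffOn)).sub (psmooth hcG hU σ),
      ?_, ?_⟩
    · -- Killing
      intro x hx i j k
      have ha := hane x hx
      have hD := hUD x hx
      have hdG : DifferentiableAt ℝ G x :=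
        (hcG.contDiffAt (hU.mem_nhds hx)).differentiableAt (by simp)
      have hdsq0 : DifferentiableAt ℝ (fun y : Fin 2 → ℝ => (y 0)^2) x :=
        (hfd_sq 0 x).differentiableAt
      have hdsq1 : DifferentiableAt ℝ (fun y : Fin 2 → ℝ => (y 1)^2) x :=
        (hfd_sq 1 x).differentiableAt
      have hp00 : ∀ m, pderiv' (fun y => S₁ ω J y 0 0) m x
          = pderiv' (fun y : Fin 2 → ℝ => (y 0)^2) m x - pderiv' G m x := by
        intro m
        rw [← pderiv'_sub hdsq0 hdG]
        apply pdcongr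
        filter_upwards [hU.mem_nhds hx] with y hy
        have h1 := hane y hy
        have h2 := hUD y hy
        simp only [S₁, Matrix.cons_val', Matrix.cons_val_zero, Matrix.cons_val_one,
          Matrix.head_cons, Matrix.empty_val', Matrix.cons_val_fin_one, Matrix.head_fin_const,
          hGdef]
        rw [Dfun] at h2 ⊢
        field_simp
        ring
      have hp11 : ∀ m, pderiv' (fun y => S₁ ω J y 1 1) m x
          = pderiv' (fun y : Fin 2 → ℝ => (y 1)^2) m x - pderiv' G m x := by
        intro m
        rw [← pderiv'_sub hdsq1 hdG]
        apply pdcongr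
        filter_upwards [hU.mem_nhds hx] with y hy
        have h1 := hane y hy
        have h2 := hUD y hy
        simp only [S₁, Matrix.cons_val', Matrix.cons_val_zero, Matrix.cons_val_one,
          Matrix.head_cons, Matrix.empty_val', Matrix.cons_val_fin_one, Matrix.head_fin_const,
          hGdef]
        rw [Dfun] at h2 ⊢
        field_simp
        ring
      have hp01 : ∀ m, pderiv' (fun y => S₁ ω J y 0 1) m x
          = pderiv' (fun y : Fin 2 → ℝ => y 0 * y 1) m x := by
        intro m
        apply pdcongr
        filter_upwards with y
        simp [S₁]
      have hp10 : ∀ m, pderiv' (fun y => S₁ ω J y 1 0) m x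
          = pderiv' (fun y : Fin 2 → ℝ => y 0 * y 1) m x := by
        intro m
        apply pdcongr
        filter_upwards with y
        simp [S₁]
      have ps00 : pderiv' (fun y : Fin 2 → ℝ => (y 0)^2) 0 x = 2 * x 0 := by
        rw [pd (hfd_sq 0 x)]; simp [pr, Pi.single_apply]
      have ps01 : pderiv' (fun y : Fin 2 → ℝ => (y 0)^2) 1 x = 0 := by
        rw [pd (hfd_sq 0 x)]; simp [pr, Pi.single_apply]
      have ps10 : pderiv' (fun y : Fin 2 → ℝ => (y 1)^2) 0 x = 0 := by
        rw [pd (hfd_sq 1 x)]; simp [pr, Pi.single_apply]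
      have ps11 : pderiv' (fun y : Fin 2 → ℝ => (y 1)^2) 1 x = 2 * x 1 := by
        rw [pd (hfd_sq 1 x)]; simp [pr, Pi.single_apply]
      have pab0 : pderiv' (fun y : Fin 2 → ℝ => y 0 * y 1) 0 x = x 1 := by
        rw [pd ((hfd_proj 0 x).fun_mul (hfd_proj 1 x))]; simp [pr, Pi.single_apply]
      have pab1 : pderiv' (fun y : Fin 2 → ℝ => y 0 * y 1) 1 x = x 0 := by
        rw [pd ((hfd_proj 0 x).fun_mul (hfd_proj 1 x))]; simp [pr, Pi.single_apply]
      fin_cases i <;> fin_cases j <;> fin_cases k <;>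
        simp only [Fin.zero_eta, Fin.mk_one, Fin.isValue, hp00, hp01, hp10, hp11,
          ps00, ps01, ps10, ps11, pab0, pab1] <;>
        norm_num <;> ring
    · -- contact
      intro x hx k
      have ha := hane x hx
      have hD := hUD x hx
      have hune : (x 0)^2 + (x 1)^2 ≠ 0 := by positivity
      have hw' := fdiv (hfd_proj 1 x) (hfd_proj 0 x) ha
      have hu' := (hfd_sq 0 x).add (hfd_sq 1 x)
      have hωu' := ((hω.differentiable (by simp) ((x 0)^2 + (x 1)^2)).hasDerivAt).comp_hasFDerivAt x hu'
      have hJw' := ((hJ.differentiable (by simp) (x 1 / x 0)).hasDerivAt).comp_hasFDerivAt x hw'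
      have hD' := (hJw'.const_mul (2:ℝ)).add ((hfd_sq 0 x).mul hωu')
      have hG' := fdiv (((hfd_sq 0 x).mul hu').mul hωu') hD' (by exact hD)
      have hdGv : ∀ m, pderiv' G m x = _ := fun m => pd hG'
      have hKd : HasDerivAt (fun t : ℝ => (1 + t^2) * J t)
          ((2 * (x 1 / x 0) ^ 1 * 1) * J (x 1 / x 0)
            + (1 + (x 1 / x 0)^2) * deriv J (x 1 / x 0)) (x 1 / x 0) := by
        have h1 : HasDerivAt (fun t : ℝ => 1 + t^2) (2 * (x 1 / x 0) ^ 1 * 1) (x 1 / x 0) :=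
          ((hasDerivAt_id (x 1 / x 0)).pow 2).const_add 1
        exact h1.mul (hJ.differentiable (by simp) (x 1 / x 0)).hasDerivAt
      have hKw' := hKd.comp_hasFDerivAt x hw'
      have hVt' := (hωu'.const_mul (1/2 : ℝ)).add (fdiv hKw' hu' hune)
      have hev : pot ω J =ᶠ[nhds x] (fun y =>
          (1/2) * ω ((y 0)^2 + (y 1)^2)
            + (1 + (y 1 / y 0)^2) * J (y 1 / y 0) / ((y 0)^2 + (y 1)^2)) := by
        filter_upwards [hU.mem_nhds hx] with y hy
        have h1 := hane y hy
        rw [pot]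
        have h2 : (y 0)^2 + (y 1)^2 ≠ 0 := by
          have := hUpos y hy; positivity
        field_simp
      have hPv : ∀ m, pderiv' (pot ω J) m x = _ :=
        fun m => (pdcongr hev).trans (pd hVt')
      have hD2 : 2 * J (x 1 / x 0) + (x 0)^2 * ω ((x 0)^2 + (x 1)^2) ≠ 0 := by
        rw [Dfun] at hD; exact hD
      have hP0 : pderiv' (pot ω J) 0 x =
          1 / 2 * (deriv ω (x 0 ^ 2 + x 1 ^ 2) * (2 * x 0)) +
            (-((1 + (x 1 / x 0) ^ 2) * J (x 1 / x 0) * (((x 0 ^ 2 + x 1 ^ 2) ^ 2)⁻¹ * (2 * x 0))) +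
              -((x 0 ^ 2 + x 1 ^ 2)⁻¹ *
                  ((2 * (x 1 / x 0) * J (x 1 / x 0)
                    + (1 + (x 1 / x 0) ^ 2) * deriv J (x 1 / x 0)) * (x 1 * (x 0 ^ 2)⁻¹)))) := by
        rw [hPv 0]
        simp only [ContinuousLinearMap.add_apply, ContinuousLinearMap.smul_apply,
          ContinuousLinearMap.coe_smul', Pi.smul_apply, ContinuousLinearMap.neg_apply,
          pr, ContinuousLinearMap.proj_apply, Pi.single_apply, smul_eq_mul]
        norm_num
      have hP1 : pderiv' (pot ω J) 1 x =
          1 / 2 * (deriv ω (x 0 ^ 2 + x 1 ^ 2) * (2 * x 1)) +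
            (-((1 + (x 1 / x 0) ^ 2) * J (x 1 / x 0) * (((x 0 ^ 2 + x 1 ^ 2) ^ 2)⁻¹ * (2 * x 1))) +
              (x 0 ^ 2 + x 1 ^ 2)⁻¹ *
                ((2 * (x 1 / x 0) * J (x 1 / x 0)
                  + (1 + (x 1 / x 0) ^ 2) * deriv J (x 1 / x 0)) * (x 0)⁻¹)) := by
        rw [hPv 1]
        simp only [ContinuousLinearMap.add_apply, ContinuousLinearMap.smul_apply,
          ContinuousLinearMap.coe_smul', Pi.smul_apply, ContinuousLinearMap.neg_apply,
          pr, ContinuousLinearMap.proj_apply, Pi.single_apply, smul_eq_mul]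
        norm_num
      have hdG0 : pderiv' G 0 x =
          -(x 0 ^ 2 * (x 0 ^ 2 + x 1 ^ 2) * ω (x 0 ^ 2 + x 1 ^ 2) *
              (((2 * J (x 1 / x 0) + x 0 ^ 2 * ω (x 0 ^ 2 + x 1 ^ 2)) ^ 2)⁻¹ *
                (-(2 * (deriv J (x 1 / x 0) * (x 1 * (x 0 ^ 2)⁻¹))) +
                  (x 0 ^ 2 * (deriv ω (x 0 ^ 2 + x 1 ^ 2) * (2 * x 0))
                    + ω (x 0 ^ 2 + x 1 ^ 2) * (2 * x 0))))) +
            (2 * J (x 1 / x 0) + x 0 ^ 2 * ω (x 0 ^ 2 + x 1 ^ 2))⁻¹ *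
              (x 0 ^ 2 * (x 0 ^ 2 + x 1 ^ 2) * (deriv ω (x 0 ^ 2 + x 1 ^ 2) * (2 * x 0)) +
                ω (x 0 ^ 2 + x 1 ^ 2) * (x 0 ^ 2 * (2 * x 0) + (x 0 ^ 2 + x 1 ^ 2) * (2 * x 0))) := by
        rw [hdGv 0]
        simp only [ContinuousLinearMap.add_apply, ContinuousLinearMap.smul_apply,
          ContinuousLinearMap.coe_smul', Pi.smul_apply, ContinuousLinearMap.neg_apply,
          pr, ContinuousLinearMap.proj_apply, Pi.single_apply, smul_eq_mul,
          Function.comp_apply, smul_eq_mul, nsmul_eq_mul]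
        norm_num
      have hdG1 : pderiv' G 1 x =
          -(x 0 ^ 2 * (x 0 ^ 2 + x 1 ^ 2) * ω (x 0 ^ 2 + x 1 ^ 2) *
              (((2 * J (x 1 / x 0) + x 0 ^ 2 * ω (x 0 ^ 2 + x 1 ^ 2)) ^ 2)⁻¹ *
                (2 * (deriv J (x 1 / x 0) * (x 0)⁻¹)
                  + x 0 ^ 2 * (deriv ω (x 0 ^ 2 + x 1 ^ 2) * (2 * x 1))))) +
            (2 * J (x 1 / x 0) + x 0 ^ 2 * ω (x 0 ^ 2 + x 1 ^ 2))⁻¹ *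
              (x 0 ^ 2 * (x 0 ^ 2 + x 1 ^ 2) * (deriv ω (x 0 ^ 2 + x 1 ^ 2) * (2 * x 1)) +
                ω (x 0 ^ 2 + x 1 ^ 2) * (x 0 ^ 2 * (2 * x 1))) := by
        rw [hdGv 1]
        simp only [ContinuousLinearMap.add_apply, ContinuousLinearMap.smul_apply,
          ContinuousLinearMap.coe_smul', Pi.smul_apply, ContinuousLinearMap.neg_apply,
          pr, ContinuousLinearMap.proj_apply, Pi.single_apply, smul_eq_mul,
          Function.comp_apply, smul_eq_mul, nsmul_eq_mul]
        norm_num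
      clear hw' hu' hωu' hJw' hD' hG' hdGv hKd hKw' hVt' hev hPv hcG hcpot hcf2 hcD hcJw hcw hcωu hcsq0 hcu hc0 hc1
      rw [Fin.sum_univ_two]
      fin_cases k
      · simp only [Fin.zero_eta, Fin.isValue, S₁, Matrix.cons_val', Matrix.cons_val_zero,
          Matrix.cons_val_one, Matrix.head_cons, Matrix.empty_val', Matrix.cons_val_fin_one,
          Matrix.head_fin_const]
        rw [hP0, hP1, hdG0, pot, Dfun]
        field_simp
        ring
      · simp only [Fin.mk_one, Fin.isValue, S₁, Matrix.cons_val', Matrix.cons_val_zero,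
          Matrix.cons_val_one, Matrix.head_cons, Matrix.empty_val', Matrix.cons_val_fin_one,
          Matrix.head_fin_const]
        rw [hP0, hP1, hdG1, pot, Dfun]
        field_simp
        ring
  · -- S₂
    refine ⟨fun x k => pderiv' (fun y => (y 0)^2 / Dfun ω J y) k x,
      fun k => psmooth hcf2 hU k, ?_, ?_⟩
    · intro x hx i j k
      fin_cases i <;> fin_cases j <;> fin_cases k <;>
        simp only [S₂, Fin.zero_eta, Fin.mk_one, Fin.isValue, Matrix.cons_val',
          Matrix.cons_val_zero, Matrix.cons_val_one, Matrix.head_cons, Matrix.empty_val',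
          Matrix.cons_val_fin_one, Matrix.head_fin_const, pderiv'_const] <;>
        norm_num <;> ring
    · intro x hx k
      have hdf2 : DifferentiableAt ℝ (fun y => (y 0)^2 / Dfun ω J y) x :=
        (hcf2.contDiffAt (hU.mem_nhds hx)).differentiableAt (by simp)
      have hdpot : DifferentiableAt ℝ (pot ω J) x :=
        (hcpot.contDiffAt (hU.mem_nhds hx)).differentiableAt (by simp)
      have heq : (fun y => ((y 0)^2 / Dfun ω J y) * pot ω J y) =ᶠ[nhds x]
          (fun _ => (1/2 : ℝ)) := by
        filter_upwards [hU.mem_nhds hx] with y hy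
        have h1 := hane y hy
        have h2 := hUD y hy
        rw [Dfun] at h2 ⊢
        rw [pot]
        field_simp
        ring
      have hz : ∀ m : Fin 2,
          x 0 ^ 2 / Dfun ω J x * pderiv' (pot ω J) m x
            + pot ω J x * pderiv' (fun y => (y 0)^2 / Dfun ω J y) m x = 0 := by
        intro m
        have h0 : pderiv' (fun y => ((y 0)^2 / Dfun ω J y) * pot ω J y) m x = 0 := by
          rw [pdcongr heq, pderiv'_const]
        rw [pderiv'_mul hdf2 hdpot] at h0
        exact h0
      rw [Fin.sum_univ_two]
      fin_cases k <;>
        simp only [S₂, Fin.zero_eta, Fin.mk_one, Fin.isValue, Matrix.cons_val',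
          Matrix.cons_val_zero, Matrix.cons_val_one, Matrix.head_cons, Matrix.empty_val',
          Matrix.cons_val_fin_one, Matrix.head_fin_const]
      · linarith [hz 0]
      · linarith [hz 1]


end ErmakovCKT

end
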